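/- arXiv:2107.12484 — 2 statements merged into one kernel-verified Lean document; each statement's English description precedes it below -/
import Mathlib

section
/- For a valid trade (Δ, Λ), the trading cost is positive: Pᵀ(Δ − Λ) ≥ (1−γ)·PᵀΔ, where P = ∇φ(R). In particular, if γ < 1 and PᵀΔ > 0, the trader's holdings strictly decrease in value at current unscaled prices. -/
/-!
A concave function lies below its tangent planes, so `φ (R + γ • Δ - Λ) = φ R` forces
`⟪∇φ R, γ • Δ - Λ⟫ ≥ 0`; splitting `(1 - γ) • Δ` off `Δ - Λ` gives both claims.
-/

theorem ConcaveOn.le_add_of_hasFDerivAt {E : Type*} [NormedAddCommGroup E] [NormedSpace ℝ E]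
    {s : Set E} {f : E → ℝ} {f' : E →L[ℝ] ℝ} {x y : E} (hf : ConcaveOn ℝ s f)
    (hx : x ∈ s) (hy : y ∈ s) (hf' : HasFDerivAt f f' x) :
    f y ≤ f x + f' (y - x) := by
  set ℓ : ℝ →ᵃ[ℝ] E := AffineMap.lineMap x y
  have hℓ : HasDerivAt (f ∘ ℓ) (f' (y - x)) 0 := by
    have := AffineMap.hasDerivAt_lineMap (a := x) (b := y) (x := (0 : ℝ))
    exact (by simpa [ℓ] using hf' : HasFDerivAt f f' (ℓ 0)).comp_hasDerivAt 0 this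
  have := (hf.comp_affineMap ℓ).slope_le_of_hasDerivAt (x := 0) (y := 1)
    (by simpa [ℓ] using hx) (by simpa [ℓ] using hy) one_pos hℓ
  simp only [slope, Function.comp_apply, ℓ, AffineMap.lineMap_apply_one,
    AffineMap.lineMap_apply_zero, vsub_eq_sub, sub_zero, inv_one, one_smul] at this
  linarith

theorem ConcaveOn.le_add_inner_of_hasGradientAt {F : Type*} [NormedAddCommGroup F]
    [InnerProductSpace ℝ F] [CompleteSpace F]
    {s : Set F} {f : F → ℝ} {g x y : F} (hf : ConcaveOn ℝ s f)
    (hx : x ∈ s) (hy : y ∈ s) (hg : HasGradientAt f g x) :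
    f y ≤ f x + inner ℝ g (y - x) :=
  hf.le_add_of_hasFDerivAt hx hy hg.hasFDerivAt

theorem trading_cost_positive_general {n : ℕ}
    (φ : EuclideanSpace ℝ (Fin n) → ℝ)
    (g : EuclideanSpace ℝ (Fin n) → EuclideanSpace ℝ (Fin n))
    (hconc : ConcaveOn ℝ {x : EuclideanSpace ℝ (Fin n) | ∀ i, 0 ≤ x i} φ)
    (hgrad : ∀ x, (∀ i, 0 ≤ x i) → HasGradientAt φ (g x) x)
    (γ : ℝ)
    (R Δ Λ : EuclideanSpace ℝ (Fin n))
    (hR : ∀ i, 0 ≤ R i)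
    (hdom : ∀ i, 0 ≤ (R + γ • Δ - Λ) i)
    (hvalid : φ (R + γ • Δ - Λ) = φ R) :
    (∑ i, g R i * (Δ i - Λ i) ≥ (1 - γ) * ∑ i, g R i * Δ i) ∧
    (γ < 1 → 0 < ∑ i, g R i * Δ i → ∑ i, g R i * (Λ i - Δ i) < 0) := by
  have hgain : 0 ≤ ∑ i, g R i * (γ * Δ i - Λ i) := by
    have := hconc.le_add_inner_of_hasGradientAt hR hdom (hgrad R hR)
    rw [hvalid, le_add_iff_nonneg_right, sub_right_comm, add_sub_cancel_left] at this
    simpa [PiLp.inner_apply, mul_comm] using this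
  have hsplit : ∑ i, g R i * (Δ i - Λ i)
      = (1 - γ) * ∑ i, g R i * Δ i + ∑ i, g R i * (γ * Δ i - Λ i) := by
    rw [Finset.mul_sum, ← Finset.sum_add_distrib]
    exact Finset.sum_congr rfl fun i _ => by ring
  have hswap : ∑ i, g R i * (Λ i - Δ i) = -∑ i, g R i * (Δ i - Λ i) := by
    simp only [← neg_sub (Δ _), mul_neg, Finset.sum_neg_distrib]
  refine ⟨by linarith, fun hγ hpos => ?_⟩
  have := mul_pos (sub_pos.mpr hγ) hpos
  linarith

/-- For a valid trade `(Δ, Λ)`, the trading cost is positive: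
`Pᵀ(Δ − Λ) ≥ (1−γ)·PᵀΔ` where `P = ∇φ(R)`; in particular, if `γ < 1` and
`PᵀΔ > 0`, the trader's holdings strictly decrease in value. -/
theorem trading_cost_positive {n : ℕ}
    (φ : EuclideanSpace ℝ (Fin n) → ℝ)
    (g : EuclideanSpace ℝ (Fin n) → EuclideanSpace ℝ (Fin n))
    (hconc : ConcaveOn ℝ {x : EuclideanSpace ℝ (Fin n) | ∀ i, 0 ≤ x i} φ)
    (hgrad : ∀ x, (∀ i, 0 ≤ x i) → HasGradientAt φ (g x) x)
    (hmono : ∀ x y : EuclideanSpace ℝ (Fin n), (∀ i, x i ≤ y i) → φ x ≤ φ y)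
    (γ : ℝ) (hγ : γ ∈ Set.Ioc (0 : ℝ) 1)
    (R Δ Λ : EuclideanSpace ℝ (Fin n))
    (hP : ∀ i, 0 < g R i)
    (hR : ∀ i, 0 ≤ R i) (hΔ : ∀ i, 0 ≤ Δ i) (hΛ : ∀ i, 0 ≤ Λ i)
    (hdom : ∀ i, 0 ≤ (R + γ • Δ - Λ) i)
    (hvalid : φ (R + γ • Δ - Λ) = φ R) :
    (∑ i, g R i * (Δ i - Λ i) ≥ (1 - γ) * ∑ i, g R i * Δ i) ∧
    (γ < 1 → 0 < ∑ i, g R i * Δ i → ∑ i, g R i * (Λ i - Δ i) < 0) :=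
  trading_cost_positive_general φ g hconc hgrad γ R Δ Λ hR hdom hvalid
end

section
/- The reverse exchange function is bounded below by the inverse exchange rate: G(λ) ≥ γ⁻²Eⱼᵢ·λ = λ·∇φ(R)ⱼ/(γ∇φ(R)ᵢ) for all λ ≥ 0 where G(λ) is finite. -/
/-!
Concavity of `φ` on the nonnegative orthant gives the gradient inequality
`φ y - φ R ≤ ⟪∇φ(R), y - R⟫`. At the point `y = R + γ G(λ) eᵢ - λ eⱼ` the left side vanishes,
so `0 ≤ γ G(λ) ∇φ(R)ᵢ - λ ∇φ(R)ⱼ`, which rearranges to the bound since `∇φ(R)ᵢ > 0`.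
-/

open scoped InnerProductSpace

theorem ConcaveOn.sub_le_of_hasFDerivAt {E : Type*} [NormedAddCommGroup E] [NormedSpace ℝ E]
    {s : Set E} {f : E → ℝ} {f' : E →L[ℝ] ℝ} {x y : E} (hf : ConcaveOn ℝ s f)
    (hx : x ∈ s) (hy : y ∈ s) (hf' : HasFDerivAt f f' x) :
    f y - f x ≤ f' (y - x) := by
  set line : ℝ →ᵃ[ℝ] E := AffineMap.lineMap x y
  have hderiv : HasDerivAt (f ∘ line) (f' (y - x)) 0 :=
    hf'.comp_hasDerivAt_of_eq 0 AffineMap.hasDerivAt_lineMap (by simp [line])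
  have hslope := (hf.comp_affineMap line).slope_le_of_hasDerivAt
    (x := 0) (y := 1) (by simpa [line] using hx) (by simpa [line] using hy) one_pos hderiv
  simpa [slope_def_field, line] using hslope

theorem ConcaveOn.sub_le_inner_of_hasGradientAt {F : Type*} [NormedAddCommGroup F]
    [InnerProductSpace ℝ F] [CompleteSpace F] {s : Set F} {f : F → ℝ} {x y g : F}
    (hf : ConcaveOn ℝ s f) (hx : x ∈ s) (hy : y ∈ s) (hg : HasGradientAt f g x) :
    f y - f x ≤ ⟪g, y - x⟫_ℝ :=
  hf.sub_le_of_hasFDerivAt hx hy hg.hasFDerivAt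

theorem EuclideanSpace.inner_smul_single_sub_smul_single {ι : Type*} [Fintype ι]
    [DecidableEq ι] (w : EuclideanSpace ℝ ι) (a b : ℝ) (i j : ι) :
    ⟪w, a • EuclideanSpace.single i (1 : ℝ) - b • EuclideanSpace.single j (1 : ℝ)⟫_ℝ
      = a * w i - b * w j := by
  simp [inner_sub_right, real_inner_smul_right, EuclideanSpace.inner_single_right]

theorem reverse_exchange_rate_bound_general {n : ℕ}
    (φ : EuclideanSpace ℝ (Fin n) → ℝ)
    (g : EuclideanSpace ℝ (Fin n) → EuclideanSpace ℝ (Fin n))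
    (hconc : ConcaveOn ℝ {x : EuclideanSpace ℝ (Fin n) | ∀ i, 0 ≤ x i} φ)
    (hgrad : ∀ x, (∀ i, 0 ≤ x i) → HasGradientAt φ (g x) x)
    (γ : ℝ) (hγ : γ ∈ Set.Ioc (0 : ℝ) 1)
    (i j : Fin n)
    (R : EuclideanSpace ℝ (Fin n)) (hR : ∀ k, 0 ≤ R k)
    (hgpos : ∀ k, 0 < g R k)
    (Dom : Set ℝ)
    (G : ℝ → ℝ)
    (hG : ∀ lam ∈ Dom, 0 ≤ G lam ∧
      (∀ k, 0 ≤ (R + (γ * G lam) • EuclideanSpace.single i (1 : ℝ)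
        - lam • EuclideanSpace.single j (1 : ℝ)) k) ∧
      φ (R + (γ * G lam) • EuclideanSpace.single i (1 : ℝ)
        - lam • EuclideanSpace.single j (1 : ℝ)) = φ R) :
    ∀ lam ∈ Dom, G lam ≥ lam * g R j / (γ * g R i) := by
  intro lam hlam
  obtain ⟨-, hy, hφy⟩ := hG lam hlam
  have hgap := hconc.sub_le_inner_of_hasGradientAt hR hy (hgrad R hR)
  rw [hφy, sub_self, add_sub_assoc, add_sub_cancel_left,
    EuclideanSpace.inner_smul_single_sub_smul_single] at hgap
  rw [ge_iff_le, div_le_iff₀ (mul_pos hγ.1 (hgpos i))]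
  linarith

/-- The reverse exchange function is bounded below by the inverse exchange-rate
line: `G(λ) ≥ λ·∇φ(R)ⱼ/(γ∇φ(R)ᵢ)` wherever `G` is finite. -/
theorem reverse_exchange_rate_bound {n : ℕ}
    (φ : EuclideanSpace ℝ (Fin n) → ℝ)
    (g : EuclideanSpace ℝ (Fin n) → EuclideanSpace ℝ (Fin n))
    (hconc : ConcaveOn ℝ {x : EuclideanSpace ℝ (Fin n) | ∀ i, 0 ≤ x i} φ)
    (hgrad : ∀ x, (∀ i, 0 ≤ x i) → HasGradientAt φ (g x) x)
    (hmono : ∀ x y : EuclideanSpace ℝ (Fin n), (∀ i, x i ≤ y i) → x ≠ y → φ x < φ y)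
    (γ : ℝ) (hγ : γ ∈ Set.Ioc (0 : ℝ) 1)
    (i j : Fin n) (hij : i ≠ j)
    (R : EuclideanSpace ℝ (Fin n)) (hR : ∀ k, 0 ≤ R k)
    (hgpos : ∀ k, 0 < g R k)
    (Dom : Set ℝ) (hDom : Dom ⊆ Set.Ici 0)
    (G : ℝ → ℝ)
    (hG : ∀ lam ∈ Dom, 0 ≤ G lam ∧
      (∀ k, 0 ≤ (R + (γ * G lam) • EuclideanSpace.single i (1 : ℝ)
        - lam • EuclideanSpace.single j (1 : ℝ)) k) ∧
      φ (R + (γ * G lam) • EuclideanSpace.single i (1 : ℝ)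
        - lam • EuclideanSpace.single j (1 : ℝ)) = φ R) :
    ∀ lam ∈ Dom, G lam ≥ lam * g R j / (γ * g R i) :=
  reverse_exchange_rate_bound_general φ g hconc hgrad γ hγ i j R hR hgpos Dom G hG
end
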